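/- Let k ≥ 1 be an integer, N > 1, Q ≥ 1 and γ > 0, and let M_{k,N} = exp^{(k)}(2N)·(exp^{(k−1)}(2N))²·(exp^{(k−2)}(2N))²⋯(exp(2N))²·(2N)². Suppose (b_j)_{j ≥ 0} is a sequence of real numbers such that, for every j ≥ 0 satisfying b_j > 2·ln κ_{k,N}(j+2) + ln γ + ln M_{k,N}, one has b_{j+1} ≥ b_j − 2·ln κ_{k,N}(j+2) − 2·ln Q + 2·∑_{i=1}^{k−1} ln^{(i)}(b_j − 2·ln κ_{k,N}(j+2) − ln γ) + 2N·ln^{(k)}(b_j − 2·ln κ_{k,N}(j+2) − ln γ). Then there exist constants A, C′ > 0 depending only on k and N such that, whenever b₀ ≥ exp^{(k−1)}(A·Q^{2/(N−1)}) + ln γ + C′, it holds for every j ≥ 0 that b_j ≥ b₀ + 2j and b_j > 2·ln κ_{k,N}(j+2) + ln γ + ln M_{k,N}. -/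

import Mathlib

/-!
As long as `b j ≥ b 0 + 2 j`, the argument `x = b j - 2 ln κ(j+2) - ln γ` of the iterated
logarithms is at least `exp^[k-1] (A Q^(2/(N-1)))`, `exp^[k] (2 exp^[k-1] (2N))` and `j + 2`,
because `ln κ(j+2) = O(ln j)` gives `2 ln κ(j+2) ≤ j/4 + K`, which the growth `2 j` absorbs.
For such `x` one step gains at least `2`: `(N-1) ln^[k] x ≥ 2 ln Q + 2` pays for the `Q`-term,
and `2 ln κ(j+2) ≤ 2 ∑ ln^[i] x + (N+1) ln^[k] x` pays for the `κ`-term (compare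
`ln^[i] (j+2) ≤ ln^[i] x` termwise when `j + 2 > exp^[k] (2N)`; otherwise
`ln (j+2) ≤ exp^[k-1] (2N) ≤ ln^[k] x / 2`).
-/

/-- `κ_{k,N}(j) = j²` if `j ≤ exp^[k](2N)`, and
`κ_{k,N}(j) = j·(ln j)·(ln^[2] j)⋯(ln^[k-2] j)·(ln^[k-1] j)^((N+1)/2)` if `j > exp^[k](2N)`. -/
noncomputable def kappa (k : ℕ) (N : ℝ) (j : ℕ) : ℝ :=
  if (j : ℝ) ≤ Real.exp^[k] (2 * N) then (j : ℝ) ^ 2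
  else (∏ i ∈ Finset.range (k - 1), Real.log^[i] (j : ℝ)) *
    (Real.log^[k - 1] (j : ℝ)) ^ ((N + 1) / 2)

/-- `M_{k,N} = exp^[k](2N)·(exp^[k-1](2N))²·(exp^[k-2](2N))²⋯(exp(2N))²·(2N)²`. -/
noncomputable def Mconst (k : ℕ) (N : ℝ) : ℝ :=
  Real.exp^[k] (2 * N) * ∏ i ∈ Finset.range k, (Real.exp^[i] (2 * N)) ^ 2

open Real Finset

lemma iterate_exp_pos {t : ℝ} (ht : 0 < t) (m : ℕ) : 0 < exp^[m] t := by
  induction m with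
  | zero => exact ht
  | succ n _ => rw [Function.iterate_succ_apply']; exact exp_pos _

lemma iterate_exp_sub_le_iterate_log {m : ℕ} {t x : ℝ} (hx : exp^[m] t ≤ x) :
    ∀ i ≤ m, exp^[m - i] t ≤ log^[i] x
  | 0, _ => hx
  | i + 1, hi => by
    have ih := iterate_exp_sub_le_iterate_log hx i (by omega)
    rw [show m - i = m - (i + 1) + 1 by omega, Function.iterate_succ_apply'] at ih
    rw [Function.iterate_succ_apply', le_log_iff_exp_le ((exp_pos _).trans_le ih)]
    exact ih

lemma iterate_log_pos_of_iterate_exp_le {m i : ℕ} {t x : ℝ} (ht : 0 < t)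
    (hx : exp^[m] t ≤ x) (hi : i ≤ m) : 0 < log^[i] x :=
  (iterate_exp_pos ht _).trans_le (iterate_exp_sub_le_iterate_log hx i hi)

lemma iterate_log_le_iterate_log {a x : ℝ} (m : ℕ) (hpos : ∀ i < m, 0 < log^[i] a)
    (hax : a ≤ x) : log^[m] a ≤ log^[m] x := by
  induction m with
  | zero => exact hax
  | succ n ih =>
    rw [Function.iterate_succ_apply', Function.iterate_succ_apply']
    exact log_le_log (hpos n n.lt_succ_self) (ih fun i hi => hpos i (hi.trans n.lt_succ_self))

lemma iterate_log_le_log {t : ℝ} {m : ℕ} (hm : 1 ≤ m) (hpos : ∀ i < m, 0 < log^[i] t) :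
    log^[m] t ≤ log t := by
  induction m, hm using Nat.le_induction with
  | base => rfl
  | succ n hn ih =>
    rw [Function.iterate_succ_apply']
    linarith [log_le_sub_one_of_pos (hpos n n.lt_succ_self),
      ih fun i hi => hpos i (hi.trans n.lt_succ_self)]

lemma log_kappa_of_le {k : ℕ} {N : ℝ} {m : ℕ} (hm : (m : ℝ) ≤ exp^[k] (2 * N)) :
    log (kappa k N m) = 2 * log m := by
  rw [kappa, if_pos hm, log_pow, Nat.cast_ofNat]

lemma log_kappa_of_lt {k : ℕ} (hk : 1 ≤ k) {N : ℝ} (hN : 0 < N) {m : ℕ}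
    (hm : exp^[k] (2 * N) < m) :
    log (kappa k N m) = ∑ i ∈ Ico 1 k, log^[i] (m : ℝ) + (N + 1) / 2 * log^[k] (m : ℝ) := by
  have hpos : ∀ i ≤ k, 0 < log^[i] (m : ℝ) := fun i hi =>
    iterate_log_pos_of_iterate_exp_le (by linarith) hm.le hi
  have hpos' : ∀ i ∈ range (k - 1), log^[i] (m : ℝ) ≠ 0 := fun i hi =>
    (hpos i (by have := mem_range.mp hi; omega)).ne'
  have hlog : ∀ i, log (log^[i] (m : ℝ)) = log^[i + 1] (m : ℝ) := fun i =>
    (Function.iterate_succ_apply' _ _ _).symm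
  rw [kappa, if_neg hm.not_ge, log_mul (prod_ne_zero_iff.mpr hpos')
      (rpow_pos_of_pos (hpos (k - 1) (by omega)) _).ne', log_prod hpos',
    log_rpow (hpos (k - 1) (by omega)), hlog, Nat.sub_add_cancel hk,
    sum_Ico_eq_sum_range]
  simp only [hlog, add_comm 1]

lemma log_kappa_le {k : ℕ} (hk : 1 ≤ k) {N : ℝ} (hN : 1 ≤ N) (m : ℕ) (hm : 1 ≤ m) :
    log (kappa k N m) ≤ (k + (N + 1) / 2) * log m := by
  have hk1 : (1 : ℝ) ≤ k := by exact_mod_cast hk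
  have hlog : 0 ≤ log (m : ℝ) := log_nonneg (by exact_mod_cast hm)
  rcases le_or_gt (m : ℝ) (exp^[k] (2 * N)) with h | h
  · rw [log_kappa_of_le h]
    nlinarith
  · have hpos : ∀ i ≤ k, 0 < log^[i] (m : ℝ) := fun i hi =>
      iterate_log_pos_of_iterate_exp_le (by linarith) h.le hi
    have hsum : ∑ i ∈ Ico 1 k, log^[i] (m : ℝ) ≤ ∑ _i ∈ Ico 1 k, log (m : ℝ) :=
      sum_le_sum fun i hi =>
        iterate_log_le_log (mem_Ico.mp hi).1 fun i' hi' => hpos i' (by grind)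
    have hlast : log^[k] (m : ℝ) ≤ log m :=
      iterate_log_le_log hk fun i hi => hpos i hi.le
    rw [sum_const, Nat.card_Ico, nsmul_eq_mul, Nat.cast_sub hk, Nat.cast_one] at hsum
    rw [log_kappa_of_lt hk (by linarith) h]
    nlinarith [hpos k le_rfl]

lemma mul_log_le_div_four_add {a y : ℝ} (ha : 0 < a) (hy : 0 < y) :
    a * log y ≤ y / 4 + a * log (4 * a) := by
  have h := log_le_sub_one_of_pos (div_pos hy (mul_pos four_pos ha))
  rw [log_div hy.ne' (by positivity), le_sub_iff_add_le, le_div_iff₀ (by positivity)] at h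
  nlinarith

lemma exists_two_log_kappa_le {k : ℕ} (hk : 1 ≤ k) {N : ℝ} (hN : 1 ≤ N) :
    ∃ K : ℝ, 0 < K ∧ ∀ j : ℕ, 2 * log (kappa k N (j + 2)) ≤ j / 4 + K := by
  set c : ℝ := k + (N + 1) / 2 with hc
  have hc2 : 2 ≤ c := by
    have : (1 : ℝ) ≤ k := by exact_mod_cast hk
    linarith
  refine ⟨1 / 2 + 2 * c * log (4 * (2 * c)),
    by nlinarith [log_pos (by linarith : (1 : ℝ) < 4 * (2 * c))], fun j => ?_⟩
  have hκ := log_kappa_le hk hN (j + 2) (by omega)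
  have hlog := mul_log_le_div_four_add (by linarith : 0 < 2 * c)
    (by positivity : (0 : ℝ) < j + 2)
  push_cast at hκ
  rw [← hc] at hκ
  linarith

lemma two_mul_log_add_two_le_iterate_log {k : ℕ} (hk : 1 ≤ k) {N Q x : ℝ} (hN : 1 < N)
    (hQ : 0 < Q) (hx : exp^[k - 1] (exp (2 / (N - 1)) * Q ^ (2 / (N - 1))) ≤ x) :
    2 * log Q + 2 ≤ (N - 1) * log^[k] x := by
  have hP : 0 < exp (2 / (N - 1)) * Q ^ (2 / (N - 1)) := by positivity
  have h := iterate_exp_sub_le_iterate_log hx (k - 1) le_rfl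
  rw [Nat.sub_self, Function.iterate_zero_apply] at h
  have hlog := log_le_log hP h
  rw [log_mul (exp_pos _).ne' (rpow_pos_of_pos hQ _).ne', log_exp, log_rpow hQ,
    ← Function.iterate_succ_apply' log, Nat.succ_eq_add_one,
    Nat.sub_add_cancel hk] at hlog
  have hscaled := mul_le_mul_of_nonneg_left hlog (by linarith : 0 ≤ N - 1)
  rw [mul_add, ← mul_assoc, mul_div_cancel₀ _ (by linarith : N - 1 ≠ 0)] at hscaled
  linarith

lemma two_log_kappa_le_iterate_log {k : ℕ} (hk : 1 ≤ k) {N x : ℝ} (hN : 1 ≤ N) {m : ℕ}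
    (hm : (m : ℝ) ≤ x) (hx : exp^[k] (2 * exp^[k - 1] (2 * N)) ≤ x) :
    2 * log (kappa k N m) ≤ 2 * ∑ i ∈ Ico 1 k, log^[i] x + (N + 1) * log^[k] x := by
  have hE := iterate_exp_pos (by linarith : 0 < 2 * N) (k - 1)
  have hpos : ∀ i ≤ k, 0 < log^[i] x := fun i hi =>
    iterate_log_pos_of_iterate_exp_le (by linarith) hx hi
  rcases le_or_gt (m : ℝ) (exp^[k] (2 * N)) with h | h
  · have hlogm : log m ≤ exp^[k - 1] (2 * N) := by
      rcases (Nat.cast_nonneg (α := ℝ) m).eq_or_lt with h0 | h0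
      · rw [← h0, log_zero]; exact hE.le
      · rw [← Nat.sub_add_cancel hk, Function.iterate_succ_apply'] at h
        simpa using log_le_log h0 h
    have hD : 2 * exp^[k - 1] (2 * N) ≤ log^[k] x := by
      simpa using iterate_exp_sub_le_iterate_log hx k le_rfl
    have hsum : 0 ≤ ∑ i ∈ Ico 1 k, log^[i] x :=
      sum_nonneg fun i hi => (hpos i (mem_Ico.mp hi).2.le).le
    rw [log_kappa_of_le h]
    nlinarith [hpos k le_rfl]
  · have hpos_m : ∀ i ≤ k, 0 < log^[i] (m : ℝ) := fun i hi =>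
      iterate_log_pos_of_iterate_exp_le (by linarith) h.le hi
    have hsum : ∑ i ∈ Ico 1 k, log^[i] (m : ℝ) ≤ ∑ i ∈ Ico 1 k, log^[i] x :=
      sum_le_sum fun i hi => iterate_log_le_iterate_log i (fun i' hi' =>
        hpos_m i' (by grind)) hm
    have hlast := iterate_log_le_iterate_log k (fun i hi => hpos_m i hi.le) hm
    rw [log_kappa_of_lt hk (by linarith) h]
    nlinarith

lemma Mconst_pos (k : ℕ) {N : ℝ} (hN : 0 < N) : 0 < Mconst k N :=
  mul_pos (iterate_exp_pos (by linarith) k)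
    (prod_pos fun i _ => pow_pos (iterate_exp_pos (by linarith) i) 2)

/-- the DeGiorgi induction claim: if the sequence `(b_j)` satisfies the
iteration inequality, then there are `A, C′ > 0` depending only on `k` and `N` such that
whenever `b₀ ≥ exp^[k-1](A·Q^(2/(N−1))) + ln γ + C′`, one has `b_j ≥ b₀ + 2j` and
`b_j > 2·ln κ(j+2) + ln γ + ln M_{k,N}` for all `j ≥ 0`. -/
theorem deGiorgi_induction_claim
    (k : ℕ) (hk : 1 ≤ k) (N : ℝ) (hN : 1 < N) :
    ∃ A : ℝ, 0 < A ∧ ∃ C' : ℝ, 0 < C' ∧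
    ∀ Q : ℝ, 1 ≤ Q → ∀ γ : ℝ, 0 < γ →
    ∀ b : ℕ → ℝ,
    (∀ j : ℕ,
      b j > 2 * Real.log (kappa k N (j + 2)) + Real.log γ + Real.log (Mconst k N) →
      b (j + 1) ≥ b j - 2 * Real.log (kappa k N (j + 2)) - 2 * Real.log Q +
        2 * ∑ i ∈ Finset.Ico 1 k,
          Real.log^[i] (b j - 2 * Real.log (kappa k N (j + 2)) - Real.log γ) +
        2 * N * Real.log^[k] (b j - 2 * Real.log (kappa k N (j + 2)) - Real.log γ)) →
    b 0 ≥ Real.exp^[k - 1] (A * Q ^ (2 / (N - 1))) + Real.log γ + C' →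
    ∀ j : ℕ,
      b j ≥ b 0 + 2 * j ∧
      b j > 2 * Real.log (kappa k N (j + 2)) + Real.log γ + Real.log (Mconst k N) := by
  obtain ⟨K, hK, hκ⟩ := exists_two_log_kappa_le hk hN.le
  have hM := Mconst_pos k (by linarith : 0 < N)
  have hD := iterate_exp_pos (mul_pos two_pos (iterate_exp_pos (by linarith : 0 < 2 * N) (k - 1))) k
  refine ⟨exp (2 / (N - 1)), exp_pos _,
    K + exp^[k] (2 * exp^[k - 1] (2 * N)) + Mconst k N + 3, by positivity, ?_⟩
  intro Q hQ γ _ b hb hb0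
  have hP := iterate_exp_pos (by positivity : 0 < exp (2 / (N - 1)) * Q ^ (2 / (N - 1))) (k - 1)
  have above : ∀ j : ℕ, b j ≥ b 0 + 2 * j →
      b j > 2 * log (kappa k N (j + 2)) + log γ + log (Mconst k N) := fun j hj => by
    linarith [hκ j, log_le_sub_one_of_pos hM, (Nat.cast_nonneg j : (0 : ℝ) ≤ j)]
  have grow : ∀ j : ℕ, b j ≥ b 0 + 2 * j := by
    intro j
    induction j with
    | zero => simp
    | succ n ih =>
      have hn : (0 : ℝ) ≤ n := Nat.cast_nonneg n
      have hκn := hκ n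
      have hgain := two_mul_log_add_two_le_iterate_log hk hN (by linarith : 0 < Q)
        (x := b n - 2 * log (kappa k N (n + 2)) - log γ) (by linarith)
      have hloss := two_log_kappa_le_iterate_log hk hN.le (m := n + 2)
        (x := b n - 2 * log (kappa k N (n + 2)) - log γ) (by push_cast; linarith) (by linarith)
      push_cast
      linarith [hb n (above n ih)]
  exact fun j => ⟨grow j, above j (grow j)⟩
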